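/- For any finite decomposition H = Σ_{l=1}^{L} σ_l b(f_l) a(g_l)ᴴ with σ_l ∈ ℂ and g_l, f_l ∈ [−1/2,1/2)², one has SDP(H) ≤ Σ_{l=1}^{L} |σ_l|; consequently SDP(H) ≤ ‖H‖_{𝒜_M}. -/

import Mathlib

open Matrix Complex
open scoped ComplexConjugate ComplexOrder

noncomputable section

/-- `cvec n x` is the uniformly sampled complex sinusoid
`(1/√n)·(1, e^{2πi x}, …, e^{2πi (n−1) x})ᵀ ∈ ℂⁿ`. -/
def cvec (n : ℕ) (x : ℝ) : Fin n → ℂ :=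
  fun k => ((1 / Real.sqrt n : ℝ) : ℂ) *
    Complex.exp (2 * Real.pi * Complex.I * ((k : ℕ) : ℂ) * (x : ℂ))

/-- Membership of a pair of frequencies in `[−1/2, 1/2)²`. -/
def inIco2 (p : ℝ × ℝ) : Prop :=
  p.1 ∈ Set.Ico (-(1 / 2) : ℝ) (1 / 2) ∧ p.2 ∈ Set.Ico (-(1 / 2) : ℝ) (1 / 2)

/-- Transmit steering vector `a(g) = c_{N₁}(g₁) ⊗ c_{N₂}(g₂)`. -/
def avec (N₁ N₂ : ℕ) (g : ℝ × ℝ) : Fin N₁ × Fin N₂ → ℂ :=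
  fun p => cvec N₁ g.1 p.1 * cvec N₂ g.2 p.2

/-- Receive steering vector `b(f) = c_{M₁}(f₁) ⊗ c_{M₂}(f₂)`. -/
def bvec (M₁ M₂ : ℕ) (f : ℝ × ℝ) : Fin M₁ × Fin M₂ → ℂ :=
  fun p => cvec M₁ f.1 p.1 * cvec M₂ f.2 p.2

/-- The matrix atomic norm `‖H‖_{𝒜_M}`. -/
def matANorm (N₁ N₂ M₁ M₂ : ℕ) (H : Matrix (Fin M₁ × Fin M₂) (Fin N₁ × Fin N₂) ℂ) : ℝ :=
  sInf { r : ℝ | ∃ (L : ℕ) (σ : Fin L → ℂ) (g f : Fin L → ℝ × ℝ),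
    (∀ l, inIco2 (g l)) ∧ (∀ l, inIco2 (f l)) ∧
    H = ∑ l, σ l • Matrix.vecMulVec (bvec M₁ M₂ (f l)) (star (avec N₁ N₂ (g l))) ∧
    r = ∑ l, ‖σ l‖ }

/-- Two-level Toeplitz matrix `T₂(U)`: block `(p,q)`, inner entry `(r,s)`, is
`U (q−p) (s−r)`; only the values of `U` on `(−m₂+1..m₂−1) × (−m₁+1..m₁−1)` are used. -/
def T2 (m₁ m₂ : ℕ) (U : ℤ → ℤ → ℂ) :
    Matrix (Fin m₁ × Fin m₂) (Fin m₁ × Fin m₂) ℂ :=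
  fun p q => U ((q.2 : ℤ) - (p.2 : ℤ)) ((q.1 : ℤ) - (p.1 : ℤ))

/-- The value `SDP(H)` of the semidefinite program. -/
def SDPval (N₁ N₂ M₁ M₂ : ℕ) (H : Matrix (Fin M₁ × Fin M₂) (Fin N₁ × Fin N₂) ℂ) : ℝ :=
  sInf { r : ℝ | ∃ (U V : ℤ → ℤ → ℂ),
    (Matrix.fromBlocks (T2 M₁ M₂ U) H Hᴴ (T2 N₁ N₂ V)).PosSemidef ∧
    r = (1 / (2 * (M₁ * M₂) : ℝ)) * ((T2 M₁ M₂ U).trace).re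
      + (1 / (2 * (N₁ * N₂) : ℝ)) * ((T2 N₁ N₂ V).trace).re }

lemma cvec_mul_conj (n : ℕ) (hn : 0 < n) (x : ℝ) (r s : Fin n) :
    cvec n x r * (starRingEnd ℂ) (cvec n x s)
      = (((n : ℝ)⁻¹ : ℝ) : ℂ) *
        Complex.exp (2 * Real.pi * Complex.I * ((((r : ℤ) - (s : ℤ)) : ℤ) : ℂ) * (x : ℂ)) := by
  unfold cvec
  rw [_root_.map_mul, ← Complex.exp_conj]
  have h2 : (starRingEnd ℂ) (2 * Real.pi * Complex.I * ((s : ℕ) : ℂ) * (x : ℂ))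
      = -(2 * Real.pi * Complex.I * ((s : ℕ) : ℂ) * (x : ℂ)) := by
    simp only [_root_.map_mul, Complex.conj_I, Complex.conj_ofReal, map_natCast, map_ofNat]
    ring_nf
  rw [h2, Complex.conj_ofReal, mul_mul_mul_comm, ← Complex.exp_add, ← Complex.ofReal_mul]
  have h3 : (1 / Real.sqrt n) * (1 / Real.sqrt n) = (n : ℝ)⁻¹ := by
    rw [div_mul_div_comm, one_mul, Real.mul_self_sqrt (by positivity), one_div]
  rw [h3]
  congr 1
  push_cast
  ring

/-- unit-modulus phase of a complex number (1 when z = 0). -/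
def phaseAux (z : ℂ) : ℂ := if z = 0 then 1 else z / (‖z‖ : ℂ)

lemma sqrtabs_mul_self (z : ℂ) :
    ((Real.sqrt (‖z‖) : ℝ) : ℂ) * ((Real.sqrt (‖z‖) : ℝ) : ℂ)
      = (‖z‖ : ℂ) := by
  rw [← Complex.ofReal_mul, Real.mul_self_sqrt (norm_nonneg z)]

lemma conj_sqrtabs (z : ℂ) :
    (starRingEnd ℂ) ((Real.sqrt (‖z‖) : ℝ) : ℂ)
      = ((Real.sqrt (‖z‖) : ℝ) : ℂ) := Complex.conj_ofReal _

lemma abs_mul_phase (z : ℂ) : (‖z‖ : ℂ) * phaseAux z = z := by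
  unfold phaseAux
  split_ifs with h
  · simp [h]
  · rw [mul_div_cancel₀]
    exact Complex.ofReal_ne_zero.mpr (norm_ne_zero_iff.mpr h)

lemma abs_mul_phase_conj (z : ℂ) :
    (‖z‖ : ℂ) * (starRingEnd ℂ) (phaseAux z) = (starRingEnd ℂ) z := by
  have := congrArg (starRingEnd ℂ) (abs_mul_phase z)
  rw [_root_.map_mul, Complex.conj_ofReal] at this
  exact this

lemma abs_mul_phase_mul_conj_phase (z : ℂ) :
    (‖z‖ : ℂ) * (phaseAux z * (starRingEnd ℂ) (phaseAux z))
      = (‖z‖ : ℂ) := by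
  unfold phaseAux
  split_ifs with h
  · simp
  · have hz : (‖z‖ : ℂ) ≠ 0 :=
      Complex.ofReal_ne_zero.mpr (norm_ne_zero_iff.mpr h)
    have : (starRingEnd ℂ) (z / (‖z‖ : ℂ))
        = (starRingEnd ℂ) z / (‖z‖ : ℂ) := by
      rw [map_div₀, Complex.conj_ofReal]
    rw [this]
    rw [div_mul_div_comm, Complex.mul_conj, Complex.normSq_eq_norm_sq]
    have h2 : (((‖z‖) ^ 2 : ℝ) : ℂ) = (‖z‖ : ℂ) * (‖z‖ : ℂ) := by
      push_cast; ring
    rw [h2, div_self (mul_ne_zero hz hz), mul_one]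

/-- generator for the Toeplitz block. -/
def UAux (m₁ m₂ L : ℕ) (σ : Fin L → ℂ) (f : Fin L → ℝ × ℝ) : ℤ → ℤ → ℂ :=
  fun i k => ∑ l, (‖σ l‖ : ℂ) * (((m₁ : ℝ)⁻¹ : ℝ) : ℂ) * (((m₂ : ℝ)⁻¹ : ℝ) : ℂ) *
    Complex.exp (2 * Real.pi * Complex.I * (((-k : ℤ)) : ℂ) * ((f l).1 : ℂ)) *
    Complex.exp (2 * Real.pi * Complex.I * (((-i : ℤ)) : ℂ) * ((f l).2 : ℂ))

/-- the rank-one vector. -/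
def wAux (N₁ N₂ M₁ M₂ : ℕ) (z : ℂ) (gl fl : ℝ × ℝ) :
    (Fin M₁ × Fin M₂) ⊕ (Fin N₁ × Fin N₂) → ℂ :=
  Sum.elim (fun p => ((Real.sqrt (‖z‖) : ℝ) : ℂ) * phaseAux z * bvec M₁ M₂ fl p)
    (fun q => ((Real.sqrt (‖z‖) : ℝ) : ℂ) * avec N₁ N₂ gl q)

lemma entry_helper (z : ℂ) (n₁ n₂ : ℕ) (h₁ : 0 < n₁) (h₂ : 0 < n₂) (x : ℝ × ℝ)
    (p q : Fin n₁ × Fin n₂) (c : ℂ) (hc : c * (starRingEnd ℂ) c = (‖z‖ : ℂ)) :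
    (c * (cvec n₁ x.1 p.1 * cvec n₂ x.2 p.2)) *
      (starRingEnd ℂ) (c * (cvec n₁ x.1 q.1 * cvec n₂ x.2 q.2))
    = (‖z‖ : ℂ) * (((n₁ : ℝ)⁻¹ : ℝ) : ℂ) * (((n₂ : ℝ)⁻¹ : ℝ) : ℂ)
      * Complex.exp (2 * Real.pi * Complex.I * (((-((q.1 : ℤ) - (p.1 : ℤ)) : ℤ)) : ℂ) * (x.1 : ℂ))
      * Complex.exp (2 * Real.pi * Complex.I * (((-((q.2 : ℤ) - (p.2 : ℤ)) : ℤ)) : ℂ) * (x.2 : ℂ)) := by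
  have e₁ := cvec_mul_conj n₁ h₁ x.1 p.1 q.1
  have e₂ := cvec_mul_conj n₂ h₂ x.2 p.2 q.2
  calc (c * (cvec n₁ x.1 p.1 * cvec n₂ x.2 p.2)) *
      (starRingEnd ℂ) (c * (cvec n₁ x.1 q.1 * cvec n₂ x.2 q.2))
      = (c * (starRingEnd ℂ) c) * ((cvec n₁ x.1 p.1 * (starRingEnd ℂ) (cvec n₁ x.1 q.1)) *
        (cvec n₂ x.2 p.2 * (starRingEnd ℂ) (cvec n₂ x.2 q.2))) := by
        simp only [_root_.map_mul]; ring
    _ = _ := by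
        rw [hc, e₁, e₂, neg_sub, neg_sub]; ring

lemma blocks_eq (N₁ N₂ M₁ M₂ L : ℕ) (hN₁ : 0 < N₁) (hN₂ : 0 < N₂) (hM₁ : 0 < M₁) (hM₂ : 0 < M₂)
    (σ : Fin L → ℂ) (g f : Fin L → ℝ × ℝ)
    (H : Matrix (Fin M₁ × Fin M₂) (Fin N₁ × Fin N₂) ℂ)
    (hH : H = ∑ l, σ l • Matrix.vecMulVec (bvec M₁ M₂ (f l)) (star (avec N₁ N₂ (g l)))) :
    Matrix.fromBlocks (T2 M₁ M₂ (UAux M₁ M₂ L σ f)) H Hᴴ (T2 N₁ N₂ (UAux N₁ N₂ L σ g))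
      = ∑ l, Matrix.vecMulVec (wAux N₁ N₂ M₁ M₂ (σ l) (g l) (f l))
          (star (wAux N₁ N₂ M₁ M₂ (σ l) (g l) (f l))) := by
  ext i j
  rw [Matrix.sum_apply]
  rcases i with p | p <;> rcases j with q | q
  · -- (inl, inl) : T2 block
    simp only [Matrix.fromBlocks_apply₁₁, T2, UAux]
    refine Finset.sum_congr rfl fun l _ => ?_
    simp only [Matrix.vecMulVec_apply, Pi.star_apply, wAux, Sum.elim_inl, bvec,
      RCLike.star_def]
    rw [entry_helper (σ l) M₁ M₂ hM₁ hM₂ (f l) p q _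
      (by rw [_root_.map_mul, conj_sqrtabs, mul_mul_mul_comm, sqrtabs_mul_self]
          exact abs_mul_phase_mul_conj_phase (σ l))]
  · -- (inl, inr) : H block
    simp only [Matrix.fromBlocks_apply₁₂, hH, Matrix.sum_apply]
    refine Finset.sum_congr rfl fun l _ => ?_
    simp only [Matrix.smul_apply, Matrix.vecMulVec_apply, Pi.star_apply, wAux,
      Sum.elim_inl, Sum.elim_inr, RCLike.star_def, smul_eq_mul]
    rw [_root_.map_mul, conj_sqrtabs]
    have : ((Real.sqrt (‖σ l‖) : ℝ) : ℂ) * phaseAux (σ l) * bvec M₁ M₂ (f l) p *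
        (((Real.sqrt (‖σ l‖) : ℝ) : ℂ) * (starRingEnd ℂ) (avec N₁ N₂ (g l) q))
        = (((Real.sqrt (‖σ l‖) : ℝ) : ℂ) * ((Real.sqrt (‖σ l‖) : ℝ) : ℂ)
            * phaseAux (σ l)) * (bvec M₁ M₂ (f l) p * (starRingEnd ℂ) (avec N₁ N₂ (g l) q)) := by
      ring
    rw [this, sqrtabs_mul_self, abs_mul_phase]
  · -- (inr, inl) : Hᴴ block
    simp only [Matrix.fromBlocks_apply₂₁, Matrix.conjTranspose_apply, hH, Matrix.sum_apply,
      star_sum]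
    refine Finset.sum_congr rfl fun l _ => ?_
    simp only [Matrix.smul_apply, Matrix.vecMulVec_apply, Pi.star_apply, wAux,
      Sum.elim_inl, Sum.elim_inr, RCLike.star_def, smul_eq_mul, _root_.map_mul,
      Complex.conj_conj, conj_sqrtabs]
    have h1 := abs_mul_phase_conj (σ l)
    have h2 := sqrtabs_mul_self (σ l)
    linear_combination (-(avec N₁ N₂ (g l) p * (starRingEnd ℂ) (bvec M₁ M₂ (f l) q))) * h1
      - (avec N₁ N₂ (g l) p * (starRingEnd ℂ) (bvec M₁ M₂ (f l) q)) *
        (starRingEnd ℂ) (phaseAux (σ l)) * h2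
  · -- (inr, inr) : T2 block
    simp only [Matrix.fromBlocks_apply₂₂, T2, UAux]
    refine Finset.sum_congr rfl fun l _ => ?_
    simp only [Matrix.vecMulVec_apply, Pi.star_apply, wAux, Sum.elim_inr, avec,
      RCLike.star_def]
    rw [entry_helper (σ l) N₁ N₂ hN₁ hN₂ (g l) p q _
      (by rw [conj_sqrtabs]; exact sqrtabs_mul_self (σ l))]

lemma psd_vecMulVec {n : Type*} [Fintype n] (v : n → ℂ) :
    (Matrix.vecMulVec v (star v)).PosSemidef := by
  rw [Matrix.vecMulVec_eq (Fin 1), ← Matrix.conjTranspose_replicateCol]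
  exact Matrix.posSemidef_self_mul_conjTranspose _

lemma psd_sum {n : Type*} [Fintype n] {L : ℕ} (A : Fin L → Matrix n n ℂ)
    (h : ∀ l, (A l).PosSemidef) : (∑ l, A l).PosSemidef := by
  refine Finset.sum_induction A Matrix.PosSemidef (fun a b ha hb => ha.add hb)
    Matrix.PosSemidef.zero (fun l _ => h l)

lemma diag_re_nonneg {n : Type*} [Fintype n] [DecidableEq n] {A : Matrix n n ℂ}
    (hA : A.PosSemidef) (i : n) : 0 ≤ (A i i).re := by
  have h := hA.dotProduct_mulVec_nonneg (Pi.single i 1)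
  have heq : star (Pi.single i 1 : n → ℂ) ⬝ᵥ A *ᵥ Pi.single i 1 = A i i := by
    have hs : star (Pi.single i 1 : n → ℂ) = Pi.single i 1 := by
      ext x
      simp [Pi.single_apply, apply_ite (star : ℂ → ℂ)]
    rw [hs]
    simp [dotProduct, Matrix.mulVec, Pi.single_apply, Finset.sum_ite_eq, ite_mul]
  rw [heq] at h
  exact (Complex.le_def.mp h).1

lemma trace_re_nonneg {n : Type*} [Fintype n] [DecidableEq n] {A : Matrix n n ℂ}
    (hA : A.PosSemidef) : 0 ≤ A.trace.re := by
  rw [Matrix.trace, Complex.re_sum]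
  exact Finset.sum_nonneg fun i _ => diag_re_nonneg hA i

lemma trace_T2_UAux (m₁ m₂ L : ℕ) (hm₁ : 0 < m₁) (hm₂ : 0 < m₂) (σ : Fin L → ℂ)
    (f : Fin L → ℝ × ℝ) :
    ((T2 m₁ m₂ (UAux m₁ m₂ L σ f)).trace).re = ∑ l, ‖σ l‖ := by
  have h0 : ∀ p : Fin m₁ × Fin m₂, T2 m₁ m₂ (UAux m₁ m₂ L σ f) p p
      = ((∑ l, ‖σ l‖ * (m₁ : ℝ)⁻¹ * (m₂ : ℝ)⁻¹ : ℝ) : ℂ) := by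
    intro p
    simp only [T2, UAux, sub_self, neg_zero, Int.cast_zero, mul_zero, zero_mul,
      Complex.exp_zero, mul_one]
    push_cast
    ring
  rw [Matrix.trace]
  simp only [Matrix.diag_apply, h0, Finset.sum_const, Finset.card_univ, Fintype.card_prod,
    Fintype.card_fin, nsmul_eq_mul]
  rw [show ((m₁ * m₂ : ℕ) : ℂ) * ((∑ l, ‖σ l‖ * (m₁ : ℝ)⁻¹ * (m₂ : ℝ)⁻¹ : ℝ) : ℂ)
      = (((m₁ * m₂ : ℕ) : ℝ) * (∑ l, ‖σ l‖ * (m₁ : ℝ)⁻¹ * (m₂ : ℝ)⁻¹) : ℝ) by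
    push_cast; ring]
  rw [Complex.ofReal_re, Finset.mul_sum]
  refine Finset.sum_congr rfl fun l _ => ?_
  have h1 : (m₁ : ℝ) ≠ 0 := Nat.cast_ne_zero.mpr hm₁.ne'
  have h2 : (m₂ : ℝ) ≠ 0 := Nat.cast_ne_zero.mpr hm₂.ne'
  push_cast
  field_simp

theorem sdp_le_aux (N₁ N₂ M₁ M₂ L : ℕ) (hN₁ : 0 < N₁) (hN₂ : 0 < N₂) (hM₁ : 0 < M₁)
    (hM₂ : 0 < M₂) (σ : Fin L → ℂ) (g f : Fin L → ℝ × ℝ)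
    (H : Matrix (Fin M₁ × Fin M₂) (Fin N₁ × Fin N₂) ℂ)
    (hH : H = ∑ l, σ l • Matrix.vecMulVec (bvec M₁ M₂ (f l)) (star (avec N₁ N₂ (g l)))) :
    SDPval N₁ N₂ M₁ M₂ H ≤ ∑ l, ‖σ l‖ := by
  have hPSD : (Matrix.fromBlocks (T2 M₁ M₂ (UAux M₁ M₂ L σ f)) H Hᴴ
      (T2 N₁ N₂ (UAux N₁ N₂ L σ g))).PosSemidef := by
    rw [blocks_eq N₁ N₂ M₁ M₂ L hN₁ hN₂ hM₁ hM₂ σ g f H hH]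
    exact psd_sum _ fun l => psd_vecMulVec _
  have hBnn : (0 : ℝ) ≤ ∑ l, ‖σ l‖ :=
    Finset.sum_nonneg fun l _ => norm_nonneg _
  have hr : (1 / (2 * (M₁ * M₂) : ℝ)) * ((T2 M₁ M₂ (UAux M₁ M₂ L σ f)).trace).re
      + (1 / (2 * (N₁ * N₂) : ℝ)) * ((T2 N₁ N₂ (UAux N₁ N₂ L σ g)).trace).re
      = (1 / (2 * (M₁ * M₂) : ℝ)) * (∑ l, ‖σ l‖)
        + (1 / (2 * (N₁ * N₂) : ℝ)) * (∑ l, ‖σ l‖) := by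
    rw [trace_T2_UAux M₁ M₂ L hM₁ hM₂ σ f, trace_T2_UAux N₁ N₂ L hN₁ hN₂ σ g]
  unfold SDPval
  have hbdd : BddBelow { r : ℝ | ∃ (U V : ℤ → ℤ → ℂ),
      (Matrix.fromBlocks (T2 M₁ M₂ U) H Hᴴ (T2 N₁ N₂ V)).PosSemidef ∧
      r = (1 / (2 * (M₁ * M₂) : ℝ)) * ((T2 M₁ M₂ U).trace).re
        + (1 / (2 * (N₁ * N₂) : ℝ)) * ((T2 N₁ N₂ V).trace).re } := by
    refine ⟨0, ?_⟩
    rintro r ⟨U, V, hpsd, rfl⟩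
    have h1 : (T2 M₁ M₂ U).PosSemidef := by
      have hs := hpsd.submatrix Sum.inl
      have he : (Matrix.fromBlocks (T2 M₁ M₂ U) H Hᴴ (T2 N₁ N₂ V)).submatrix
          (Sum.inl : (Fin M₁ × Fin M₂) → _) Sum.inl = T2 M₁ M₂ U := by
        ext p q; simp [Matrix.submatrix_apply]
      rwa [he] at hs
    have h2 : (T2 N₁ N₂ V).PosSemidef := by
      have hs := hpsd.submatrix Sum.inr
      have he : (Matrix.fromBlocks (T2 M₁ M₂ U) H Hᴴ (T2 N₁ N₂ V)).submatrix
          (Sum.inr : (Fin N₁ × Fin N₂) → _) Sum.inr = T2 N₁ N₂ V := by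
        ext p q; simp [Matrix.submatrix_apply]
      rwa [he] at hs
    have t1 := trace_re_nonneg h1
    have t2 := trace_re_nonneg h2
    have c1 : (0:ℝ) ≤ 1 / (2 * (M₁ * M₂) : ℝ) := by positivity
    have c2 : (0:ℝ) ≤ 1 / (2 * (N₁ * N₂) : ℝ) := by positivity
    have := add_nonneg (mul_nonneg c1 t1) (mul_nonneg c2 t2)
    simpa using this
  have hmem : (1 / (2 * (M₁ * M₂) : ℝ)) * (∑ l, ‖σ l‖)
      + (1 / (2 * (N₁ * N₂) : ℝ)) * (∑ l, ‖σ l‖) ∈ { r : ℝ | ∃ (U V : ℤ → ℤ → ℂ),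
      (Matrix.fromBlocks (T2 M₁ M₂ U) H Hᴴ (T2 N₁ N₂ V)).PosSemidef ∧
      r = (1 / (2 * (M₁ * M₂) : ℝ)) * ((T2 M₁ M₂ U).trace).re
        + (1 / (2 * (N₁ * N₂) : ℝ)) * ((T2 N₁ N₂ V).trace).re } :=
    ⟨UAux M₁ M₂ L σ f, UAux N₁ N₂ L σ g, hPSD, hr.symm⟩
  refine (csInf_le hbdd hmem).trans ?_
  have hM : (1:ℝ) ≤ (M₁ * M₂ : ℝ) := by
    have : 1 ≤ M₁ * M₂ := Nat.one_le_iff_ne_zero.mpr (Nat.mul_ne_zero hM₁.ne' hM₂.ne')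
    exact_mod_cast this
  have hN : (1:ℝ) ≤ (N₁ * N₂ : ℝ) := by
    have : 1 ≤ N₁ * N₂ := Nat.one_le_iff_ne_zero.mpr (Nat.mul_ne_zero hN₁.ne' hN₂.ne')
    exact_mod_cast this
  have d1 : 1 / (2 * (M₁ * M₂) : ℝ) ≤ 1 / 2 :=
    one_div_le_one_div_of_le (by norm_num) (by linarith)
  have d2 : 1 / (2 * (N₁ * N₂) : ℝ) ≤ 1 / 2 :=
    one_div_le_one_div_of_le (by norm_num) (by linarith)
  have e1 := mul_le_mul_of_nonneg_right d1 hBnn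
  have e2 := mul_le_mul_of_nonneg_right d2 hBnn
  push_cast at e1 e2 ⊢
  linarith

/-- for any finite atomic decomposition `H = Σ_l σ_l b(f_l) a(g_l)ᴴ`,
`SDP(H) ≤ Σ_l |σ_l|`; consequently `SDP(H) ≤ ‖H‖_{𝒜_M}`. -/
theorem SDPval_le_sum_abs
    (N₁ N₂ M₁ M₂ L : ℕ) (hN₁ : 0 < N₁) (hN₂ : 0 < N₂) (hM₁ : 0 < M₁) (hM₂ : 0 < M₂)
    (σ : Fin L → ℂ) (g f : Fin L → ℝ × ℝ)
    (hg : ∀ l, inIco2 (g l)) (hf : ∀ l, inIco2 (f l))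
    (H : Matrix (Fin M₁ × Fin M₂) (Fin N₁ × Fin N₂) ℂ)
    (hH : H = ∑ l, σ l • Matrix.vecMulVec (bvec M₁ M₂ (f l)) (star (avec N₁ N₂ (g l)))) :
    SDPval N₁ N₂ M₁ M₂ H ≤ ∑ l, ‖σ l‖ ∧
    SDPval N₁ N₂ M₁ M₂ H ≤ matANorm N₁ N₂ M₁ M₂ H := by
  constructor
  · exact sdp_le_aux N₁ N₂ M₁ M₂ L hN₁ hN₂ hM₁ hM₂ σ g f H hH
  · unfold matANorm
    refine le_csInf ⟨∑ l, ‖σ l‖, L, σ, g, f, hg, hf, hH, rfl⟩ ?_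
    rintro b ⟨L', σ', g', f', hg', hf', hH', rfl⟩
    exact sdp_le_aux N₁ N₂ M₁ M₂ L' hN₁ hN₂ hM₁ hM₂ σ' g' f' H hH'
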